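/- arXiv:1103.3118 — 4 statements merged into one kernel-verified Lean document; each statement's English description precedes it below -/
import Mathlib

section
/- Let g be an invertible symmetric real 4×4 matrix. Then the Tamm–Rubilar quartic form of the Hodge star medium tensor *_g satisfies 𝒢_{*_g}(ξ) = sgn(det g) · √|det g| · (g(ξ,ξ))² for all ξ ∈ ℝ⁴. Consequently the Fresnel surface of *_g is exactly the null cone of g on covectors: {ξ ∈ ℝ⁴ : 𝒢_{*_g}(ξ) = 0} = {ξ ∈ ℝ⁴ : g(ξ,ξ) = 0}. -/
open scoped BigOperators
open Matrix

noncomputable section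

/-- The Levi-Civita symbol `ε_{ijkl}` on `{0,1,2,3}`. -/
def eps4 (i j k l : Fin 4) : ℝ :=
  (((j.val : ℝ) - (i.val : ℝ)) * ((k.val : ℝ) - (i.val : ℝ)) * ((l.val : ℝ) - (i.val : ℝ)) *
      ((k.val : ℝ) - (j.val : ℝ)) * ((l.val : ℝ) - (j.val : ℝ)) * ((l.val : ℝ) - (k.val : ℝ))) / 12

/-- A 2-form on ℝ⁴: an antisymmetric array of components. -/
def IsAlt (u : Fin 4 → Fin 4 → ℝ) : Prop := ∀ i j, u i j = - u j i

/-- The components `κ i j k l = κ^{ij}_{kl}` form a medium tensor: antisymmetry in the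
upper pair and in the lower pair. -/
def IsMedium (κ : Fin 4 → Fin 4 → Fin 4 → Fin 4 → ℝ) : Prop :=
  (∀ i j k l, κ i j k l = - κ j i k l) ∧ (∀ i j k l, κ i j k l = - κ i j l k)

/-- Action of a medium tensor on a 2-form: `(κ F)_{ij} = ½ κ^{rs}_{ij} F_{rs}`. -/
def act (κ : Fin 4 → Fin 4 → Fin 4 → Fin 4 → ℝ) (F : Fin 4 → Fin 4 → ℝ) (i j : Fin 4) : ℝ :=
  (1 / 2) * ∑ r, ∑ s, κ r s i j * F r s

/-- Wedge pairing of two 2-forms: `u ∧ v = ¼ ε^{ijkl} u_{ij} v_{kl}`. -/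
def wedge2 (u v : Fin 4 → Fin 4 → ℝ) : ℝ :=
  (1 / 4) * ∑ i, ∑ j, ∑ k, ∑ l, eps4 i j k l * u i j * v k l

/-- A medium tensor is skewon-free if `u ∧ κ(v) = κ(u) ∧ v` for all 2-forms `u, v`. -/
def SkewonFree (κ : Fin 4 → Fin 4 → Fin 4 → Fin 4 → ℝ) : Prop :=
  ∀ u v, IsAlt u → IsAlt v → wedge2 u (act κ v) = wedge2 (act κ u) v

/-- Trace of a medium tensor: `½ κ^{ij}_{ij}`. -/
def mtrace (κ : Fin 4 → Fin 4 → Fin 4 → Fin 4 → ℝ) : ℝ := (1 / 2) * ∑ i, ∑ j, κ i j i j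

/-- The (unsymmetrised) Tamm-Rubilar tensor density `𝒢₀^{ijkl}`. -/
def TR0 (κ : Fin 4 → Fin 4 → Fin 4 → Fin 4 → ℝ) (i j k l : Fin 4) : ℝ :=
  (1 / 48) * ∑ a₁, ∑ a₂, ∑ a₃, ∑ a₄, ∑ b₁, ∑ b₂, ∑ b₃, ∑ b₄, ∑ b₅, ∑ b₆,
    κ a₁ a₂ b₁ b₂ * κ a₃ i b₃ b₄ * κ a₄ j b₅ b₆ *
      eps4 b₁ b₂ b₅ k * eps4 b₃ b₄ b₆ l * eps4 a₁ a₂ a₃ a₄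

/-- The Tamm-Rubilar quartic form `𝒢_κ(ξ) = 𝒢₀^{ijkl} ξ_i ξ_j ξ_k ξ_l`. -/
def TR (κ : Fin 4 → Fin 4 → Fin 4 → Fin 4 → ℝ) (ξ : Fin 4 → ℝ) : ℝ :=
  ∑ i, ∑ j, ∑ k, ∑ l, TR0 κ i j k l * ξ i * ξ j * ξ k * ξ l

/-- The Hodge star medium tensor of an invertible symmetric 4×4 matrix:
`(*_g)^{ij}_{rs} = √|det g| g^{ia} g^{jb} ε_{abrs}`. -/
def hodge (g : Matrix (Fin 4) (Fin 4) ℝ) (i j r s : Fin 4) : ℝ :=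
  Real.sqrt |g.det| * ∑ a, ∑ b, g⁻¹ i a * g⁻¹ j b * eps4 a b r s

/-- Lorentzian signature `(+---)` or `(-+++)` for a symmetric real 4×4 matrix. -/
def IsLorentzian (g : Matrix (Fin 4) (Fin 4) ℝ) : Prop :=
  ∃ P : Matrix (Fin 4) (Fin 4) ℝ, IsUnit P.det ∧
    (Pᵀ * g * P = Matrix.diagonal ![1, -1, -1, -1] ∨
      Pᵀ * g * P = Matrix.diagonal ![-1, 1, 1, 1])

/-- The metric evaluated on covectors: `g(ξ,η) = g^{ij} ξ_i η_j` (inverse matrix entries). -/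
def gform (g : Matrix (Fin 4) (Fin 4) ℝ) (ξ η : Fin 4 → ℝ) : ℝ :=
  ∑ i, ∑ j, g⁻¹ i j * ξ i * η j

/-! `*_g = √|det g| · K(g⁻¹)` with `K(h)^{ij}_{rs} = h^{ia} h^{jb} ε_{abrs}` (`raisedEps h`),
and `𝒢₀` is cubic in the medium, so everything reduces to `𝒢₀` of `K(h)`. Contracting a lower
pair of `K(h)` with `ε` gives `2 (h^{am} h^{bn} - h^{an} h^{bm})` by the `εε`-identity; the upper
contraction with `ε_{a₁a₂a₃a₄}` then produces `det h`, and two more `εε`-contractions leave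
`𝒢₀(K h)^{ijkl} = det h (⅔ h^{il} h^{jk} + ⅓ h^{ik} h^{jl})`, whose quartic form is
`det h · h(ξ,ξ)²`. For `h = g⁻¹` the prefactor is `√|det g|³ / det g = sgn(det g) √|det g|`. -/

section SumComm

variable {α M : Type*} [Fintype α] [AddCommMonoid M]

theorem Finset.sum_comm_two_two (f : α → α → α → α → M) :
    ∑ a, ∑ b, ∑ c, ∑ d, f a b c d = ∑ c, ∑ d, ∑ a, ∑ b, f a b c d := by
  simpa only [Fintype.sum_prod_type] using
    Finset.sum_comm (s := (Finset.univ : Finset (α × α))) (t := (Finset.univ : Finset (α × α)))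
      (f := fun p q => f p.1 p.2 q.1 q.2)

theorem Finset.sum_comm_three_one (f : α → α → α → α → M) :
    ∑ a, ∑ b, ∑ c, ∑ d, f a b c d = ∑ d, ∑ a, ∑ b, ∑ c, f a b c d := by
  simpa only [Fintype.sum_prod_type] using
    Finset.sum_comm (s := (Finset.univ : Finset (α × α × α))) (t := (Finset.univ : Finset α))
      (f := fun p d => f p.1 p.2.1 p.2.2 d)

theorem Finset.sum_comm_four_two (f : α → α → α → α → α → α → M) :
    ∑ a, ∑ b, ∑ c, ∑ d, ∑ e, ∑ e', f a b c d e e' =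
      ∑ e, ∑ e', ∑ a, ∑ b, ∑ c, ∑ d, f a b c d e e' := by
  simpa only [Fintype.sum_prod_type] using
    Finset.sum_comm (s := (Finset.univ : Finset (α × α × α × α)))
      (t := (Finset.univ : Finset (α × α))) (f := fun p q => f p.1 p.2.1 p.2.2.1 p.2.2.2 q.1 q.2)

theorem Finset.sum_comm_four_four (f : α → α → α → α → α → α → α → α → M) :
    ∑ a, ∑ b, ∑ c, ∑ d, ∑ e, ∑ e', ∑ e'', ∑ e''', f a b c d e e' e'' e''' =
      ∑ e, ∑ e', ∑ e'', ∑ e''', ∑ a, ∑ b, ∑ c, ∑ d, f a b c d e e' e'' e''' := by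
  simpa only [Fintype.sum_prod_type] using
    Finset.sum_comm (s := (Finset.univ : Finset (α × α × α × α)))
      (t := (Finset.univ : Finset (α × α × α × α)))
      (f := fun p q => f p.1 p.2.1 p.2.2.1 p.2.2.2 q.1 q.2.1 q.2.2.1 q.2.2.2)

end SumComm

section LeviCivita

-- Integer copy of `eps4`, so that identities between its values can be checked by `decide`.
def epsInt (i j k l : Fin 4) : ℤ :=
  ((j : ℤ) - i) * ((k : ℤ) - i) * ((l : ℤ) - i) * ((k : ℤ) - j) * ((l : ℤ) - j) * ((l : ℤ) - k) / 12

theorem eps4_eq_epsInt (i j k l : Fin 4) : eps4 i j k l = epsInt i j k l := by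
  have h12 : ∀ i j k l : Fin 4, (12 : ℤ) ∣
      ((j : ℤ) - i) * ((k : ℤ) - i) * ((l : ℤ) - i) * ((k : ℤ) - j) * ((l : ℤ) - j) *
        ((l : ℤ) - k) := by
    decide
  rw [eps4, epsInt, Int.cast_div (h12 i j k l) (by norm_num)]
  push_cast
  rfl

theorem eps4_swap (i j k l : Fin 4) : eps4 j i k l = -eps4 i j k l := by
  unfold eps4
  ring

theorem eps4_contract_two (a b m n : Fin 4) :
    ∑ c, ∑ d, eps4 a b c d * eps4 c d m n =
      2 * ((if a = m then 1 else 0) * (if b = n then 1 else 0) -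
        (if a = n then 1 else 0) * (if b = m then 1 else 0)) := by
  have key : ∀ a b m n : Fin 4, ∑ c, ∑ d, epsInt a b c d * epsInt c d m n =
      2 * ((if a = m then 1 else 0) * (if b = n then 1 else 0) -
        (if a = n then 1 else 0) * (if b = m then 1 else 0)) := by
    decide
  simp only [eps4_eq_epsInt]
  exact_mod_cast key a b m n

theorem eps4_contract_three (q k : Fin 4) :
    ∑ b, ∑ c, ∑ p, eps4 p q b c * eps4 b k c p = 6 * if q = k then 1 else 0 := by
  have key : ∀ q k : Fin 4, ∑ b, ∑ c, ∑ p, epsInt p q b c * epsInt b k c p =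
      6 * if q = k then 1 else 0 := by
    decide
  simp only [eps4_eq_epsInt]
  exact_mod_cast key q k

theorem eps4_contract_two' (q c k l : Fin 4) :
    ∑ b, ∑ p, eps4 p q b c * eps4 b k l p =
      2 * ((if q = k then 1 else 0) * (if c = l then 1 else 0) -
        (if q = l then 1 else 0) * (if c = k then 1 else 0)) := by
  have key : ∀ q c k l : Fin 4, ∑ b, ∑ p, epsInt p q b c * epsInt b k l p =
      2 * ((if q = k then 1 else 0) * (if c = l then 1 else 0) -
        (if q = l then 1 else 0) * (if c = k then 1 else 0)) := by
    decide
  simp only [eps4_eq_epsInt]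
  exact_mod_cast key q c k l

theorem det_eq_sum_eps4 (M : Matrix (Fin 4) (Fin 4) ℝ) :
    M.det = ∑ a₁, ∑ a₂, ∑ a₃, ∑ a₄, eps4 a₁ a₂ a₃ a₄ * M a₁ 0 * M a₂ 1 * M a₃ 2 * M a₄ 3 := by
  rw [Matrix.det_succ_column_zero]
  simp only [Fin.sum_univ_succ, Matrix.det_fin_three, Matrix.submatrix_apply, Fin.succAbove,
    eps4_eq_epsInt]
  simp [epsInt]
  ring

theorem sum_eps4_mul_eq_det_mul_eps4 (h : Matrix (Fin 4) (Fin 4) ℝ) (x y z w : Fin 4) :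
    ∑ a₁, ∑ a₂, ∑ a₃, ∑ a₄, eps4 a₁ a₂ a₃ a₄ * h a₁ x * h a₂ y * h a₃ z * h a₄ w =
      h.det * eps4 x y z w := by
  -- right multiplication by `P` selects the columns `x, y, z, w` of `h`
  let P : Matrix (Fin 4) (Fin 4) ℝ :=
    Matrix.of fun c r => (1 : Matrix (Fin 4) (Fin 4) ℝ) c (![x, y, z, w] r)
  have hP : P.det = eps4 x y z w := by
    rw [det_eq_sum_eps4 P]
    simp only [P, Matrix.of_apply, Matrix.one_apply, mul_ite, mul_one, mul_zero,
      Finset.sum_ite_eq', Finset.mem_univ, if_true]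
    rfl
  have hhP : h * P = h.submatrix id ![x, y, z, w] := by
    ext i r
    simp only [P, Matrix.mul_apply, Matrix.of_apply, Matrix.one_apply, mul_ite, mul_one, mul_zero,
      Finset.sum_ite_eq', Finset.mem_univ, if_true]
    rfl
  rw [← hP, ← Matrix.det_mul, hhP, det_eq_sum_eps4]
  rfl

end LeviCivita

theorem TR0_smul (c : ℝ) (κ : Fin 4 → Fin 4 → Fin 4 → Fin 4 → ℝ) (i j k l : Fin 4) :
    TR0 (fun a b r s => c * κ a b r s) i j k l = c ^ 3 * TR0 κ i j k l := by
  rw [TR0, TR0, mul_left_comm]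
  congr 1
  simp_rw [Finset.mul_sum]
  iterate 10 refine Finset.sum_congr rfl fun _ _ => ?_
  ring

def contractEps (κ : Fin 4 → Fin 4 → Fin 4 → Fin 4 → ℝ) (a b m n : Fin 4) : ℝ :=
  ∑ c, ∑ d, κ a b c d * eps4 c d m n

theorem TR0_eq_sum_contractEps (κ : Fin 4 → Fin 4 → Fin 4 → Fin 4 → ℝ) (i j k l : Fin 4) :
    TR0 κ i j k l = 1 / 48 * ∑ a₁, ∑ a₂, ∑ a₃, ∑ a₄, eps4 a₁ a₂ a₃ a₄ *
      ∑ b₅, ∑ b₆, κ a₄ j b₅ b₆ * contractEps κ a₃ i b₆ l * contractEps κ a₁ a₂ b₅ k := by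
  unfold TR0 contractEps
  congr 1
  iterate 4 refine Finset.sum_congr rfl fun _ _ => ?_
  rw [Finset.sum_comm_four_two]
  simp only [Finset.mul_sum, Finset.sum_mul]
  iterate 6 refine Finset.sum_congr rfl fun _ _ => ?_
  ring

def raisedEps (h : Matrix (Fin 4) (Fin 4) ℝ) (i j r s : Fin 4) : ℝ :=
  ∑ a, ∑ b, h i a * h j b * eps4 a b r s

section RaisedEps

variable (h : Matrix (Fin 4) (Fin 4) ℝ)

theorem contractEps_raisedEps (a b m n : Fin 4) :
    contractEps (raisedEps h) a b m n = 2 * (h a m * h b n - h a n * h b m) := by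
  calc contractEps (raisedEps h) a b m n
      = ∑ p, ∑ q, h a p * h b q * ∑ c, ∑ d, eps4 p q c d * eps4 c d m n := by
        simp only [contractEps, raisedEps, Finset.sum_mul, Finset.mul_sum]
        rw [Finset.sum_comm_two_two]
        iterate 4 refine Finset.sum_congr rfl fun _ _ => ?_
        ring
    _ = 2 * (h a m * h b n - h a n * h b m) := by
        simp only [eps4_contract_two, mul_sub, mul_ite, mul_one, mul_zero,
          Finset.sum_sub_distrib, Finset.sum_ite_eq', Finset.mem_univ, if_true]
        ring

theorem sum_eps4_mul_contractEps_raisedEps (i k l b c p : Fin 4) :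
    ∑ a₁, ∑ a₂, ∑ a₃, ∑ a₄, eps4 a₁ a₂ a₃ a₄ * contractEps (raisedEps h) a₃ i c l *
        contractEps (raisedEps h) a₁ a₂ b k * h a₄ p =
      8 * h.det * (h i l * eps4 b k c p - h i c * eps4 b k l p) := by
  have expand : ∀ a₁ a₂ a₃ a₄ : Fin 4, eps4 a₁ a₂ a₃ a₄ * contractEps (raisedEps h) a₃ i c l *
        contractEps (raisedEps h) a₁ a₂ b k * h a₄ p
      = h i l * (4 * (eps4 a₁ a₂ a₃ a₄ * h a₁ b * h a₂ k * h a₃ c * h a₄ p))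
        - h i c * (4 * (eps4 a₁ a₂ a₃ a₄ * h a₁ b * h a₂ k * h a₃ l * h a₄ p))
        - h i l * (4 * (eps4 a₁ a₂ a₃ a₄ * h a₁ k * h a₂ b * h a₃ c * h a₄ p))
        + h i c * (4 * (eps4 a₁ a₂ a₃ a₄ * h a₁ k * h a₂ b * h a₃ l * h a₄ p)) := by
    intro a₁ a₂ a₃ a₄
    rw [contractEps_raisedEps, contractEps_raisedEps]
    ring
  simp only [expand, Finset.sum_add_distrib, Finset.sum_sub_distrib, ← Finset.mul_sum,
    sum_eps4_mul_eq_det_mul_eps4, eps4_swap k b]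
  ring

theorem sum_mul_eps4_mul_sub (u v : Fin 4 → ℝ) (k l : Fin 4) :
    ∑ q, u q * ∑ b, ∑ c, ∑ p, eps4 p q b c * (v l * eps4 b k c p - v c * eps4 b k l p) =
      4 * v l * u k + 2 * v k * u l := by
  calc ∑ q, u q * ∑ b, ∑ c, ∑ p, eps4 p q b c * (v l * eps4 b k c p - v c * eps4 b k l p)
      = ∑ q, u q * (v l * ∑ b, ∑ c, ∑ p, eps4 p q b c * eps4 b k c p -
          ∑ c, v c * ∑ b, ∑ p, eps4 p q b c * eps4 b k l p) := by
        refine Finset.sum_congr rfl fun q _ => ?_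
        simp only [mul_sub, Finset.sum_sub_distrib, Finset.mul_sum]
        congr 1
        on_goal 2 => rw [Finset.sum_comm]
        all_goals iterate 3 refine Finset.sum_congr rfl fun _ _ => ?_
        all_goals ring
    _ = 4 * v l * u k + 2 * v k * u l := by
        simp only [eps4_contract_three, eps4_contract_two', mul_sub, mul_ite, mul_one,
          mul_zero, Finset.sum_sub_distrib, Finset.sum_ite_eq', Finset.mem_univ, if_true]
        ring

theorem TR0_raisedEps (i j k l : Fin 4) :
    TR0 (raisedEps h) i j k l = h.det * (2 / 3 * h i l * h j k + 1 / 3 * h i k * h j l) := by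
  calc TR0 (raisedEps h) i j k l
      = 1 / 48 * ∑ q, h j q * ∑ b, ∑ c, ∑ p, eps4 p q b c *
          ∑ a₁, ∑ a₂, ∑ a₃, ∑ a₄, eps4 a₁ a₂ a₃ a₄ * contractEps (raisedEps h) a₃ i c l *
            contractEps (raisedEps h) a₁ a₂ b k * h a₄ p := by
        rw [TR0_eq_sum_contractEps]
        simp only [raisedEps, Finset.mul_sum, Finset.sum_mul]
        rw [Finset.sum_comm_four_four, Finset.sum_comm_three_one]
        iterate 8 refine Finset.sum_congr rfl fun _ _ => ?_
        ring
    _ = h.det / 6 * ∑ q, h j q * ∑ b, ∑ c, ∑ p, eps4 p q b c *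
          (h i l * eps4 b k c p - h i c * eps4 b k l p) := by
        simp only [sum_eps4_mul_contractEps_raisedEps, Finset.mul_sum]
        iterate 4 refine Finset.sum_congr rfl fun _ _ => ?_
        ring
    _ = h.det * (2 / 3 * h i l * h j k + 1 / 3 * h i k * h j l) := by
        rw [sum_mul_eps4_mul_sub]
        ring

end RaisedEps

theorem TR_raisedEps (h : Matrix (Fin 4) (Fin 4) ℝ) (ξ : Fin 4 → ℝ) :
    TR (raisedEps h) ξ = h.det * (∑ i, ∑ j, h i j * ξ i * ξ j) ^ 2 := by
  simp only [TR, TR0_raisedEps, Fin.sum_univ_four]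
  ring

theorem TR_smul (c : ℝ) (κ : Fin 4 → Fin 4 → Fin 4 → Fin 4 → ℝ) (ξ : Fin 4 → ℝ) :
    TR (fun a b r s => c * κ a b r s) ξ = c ^ 3 * TR κ ξ := by
  simp only [TR, TR0_smul, Finset.mul_sum]
  iterate 4 refine Finset.sum_congr rfl fun _ _ => ?_
  ring

theorem TR_hodge (g : Matrix (Fin 4) (Fin 4) ℝ) (ξ : Fin 4 → ℝ) :
    TR (hodge g) ξ = Real.sqrt |g.det| ^ 3 * g⁻¹.det * gform g ξ ξ ^ 2 := by
  rw [show hodge g = fun i j r s => Real.sqrt |g.det| * raisedEps g⁻¹ i j r s from rfl,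
    TR_smul, TR_raisedEps, gform]
  ring

theorem Real.sqrt_abs_pow_three_mul_inv (d : ℝ) :
    Real.sqrt |d| ^ 3 * d⁻¹ = Real.sign d * Real.sqrt |d| := by
  rcases lt_trichotomy d 0 with hd | rfl | hd
  · rw [Real.sign_of_neg hd, pow_succ, Real.sq_sqrt (abs_nonneg d), abs_of_neg hd]
    field_simp [hd.ne]
  · simp
  · rw [Real.sign_of_pos hd, pow_succ, Real.sq_sqrt (abs_nonneg d), abs_of_pos hd]
    field_simp [hd.ne']

theorem tammRubilar_of_hodge_general
    (g : Matrix (Fin 4) (Fin 4) ℝ) (hdet : IsUnit g.det) :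
    (∀ ξ : Fin 4 → ℝ,
        TR (hodge g) ξ = Real.sign g.det * Real.sqrt |g.det| * (gform g ξ ξ) ^ 2) ∧
      {ξ : Fin 4 → ℝ | TR (hodge g) ξ = 0} = {ξ : Fin 4 → ℝ | gform g ξ ξ = 0} := by
  have formula (ξ : Fin 4 → ℝ) :
      TR (hodge g) ξ = Real.sign g.det * Real.sqrt |g.det| * (gform g ξ ξ) ^ 2 := by
    rw [TR_hodge, Matrix.det_nonsing_inv, Ring.inverse_eq_inv', Real.sqrt_abs_pow_three_mul_inv]
  have hd : g.det ≠ 0 := hdet.ne_zero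
  refine ⟨formula, Set.ext fun ξ => ?_⟩
  simp [formula, Real.sign_eq_zero_iff, hd]

/-- For an invertible symmetric `g`, the Tamm-Rubilar quartic form of the
Hodge star medium tensor `*_g` is `sgn(det g) √|det g| (g(ξ,ξ))²`; consequently the
Fresnel surface of `*_g` is exactly the null cone of `g` on covectors. -/
theorem tammRubilar_of_hodge
    (g : Matrix (Fin 4) (Fin 4) ℝ) (hsymm : g.IsSymm) (hdet : IsUnit g.det) :
    (∀ ξ : Fin 4 → ℝ,
        TR (hodge g) ξ = Real.sign g.det * Real.sqrt |g.det| * (gform g ξ ξ) ^ 2) ∧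
      {ξ : Fin 4 → ℝ | TR (hodge g) ξ = 0} = {ξ : Fin 4 → ℝ | gform g ξ ξ = 0} :=
  tammRubilar_of_hodge_general g hdet

end
end

section
/- Let g be an invertible symmetric real 4×4 matrix, let κ = *_g be its Hodge star medium tensor, and let ξ ∈ ℝ⁴ be nonzero. Then the kernel of the linear map L_ξ : α ↦ ξ ∧ κ(ξ∧α) has dimension 3 if g(ξ,ξ) = 0, and dimension 1 (namely ker L_ξ = span ξ) if g(ξ,ξ) ≠ 0. -/
open scoped BigOperators
open Matrix

noncomputable section

/-- The 2-form `ξ ∧ α` of two covectors. -/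
def wcov (ξ α : Fin 4 → ℝ) (i j : Fin 4) : ℝ := ξ i * α j - ξ j * α i

/-- The 3-form `L_ξ(α) = ξ ∧ κ(ξ ∧ α)`. -/
def Lfun (κ : Fin 4 → Fin 4 → Fin 4 → Fin 4 → ℝ) (ξ α : Fin 4 → ℝ) (i j k : Fin 4) : ℝ :=
  ξ i * act κ (wcov ξ α) j k + ξ j * act κ (wcov ξ α) k i + ξ k * act κ (wcov ξ α) i j

lemma act_wcov_add (κ : Fin 4 → Fin 4 → Fin 4 → Fin 4 → ℝ) (ξ α β : Fin 4 → ℝ) (j k : Fin 4) :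
    act κ (wcov ξ (α + β)) j k = act κ (wcov ξ α) j k + act κ (wcov ξ β) j k := by
  simp only [act, wcov, Pi.add_apply, Finset.mul_sum]
  rw [← Finset.sum_add_distrib]
  refine Finset.sum_congr rfl fun r _ => ?_
  rw [← Finset.sum_add_distrib]
  exact Finset.sum_congr rfl fun s _ => by ring

lemma act_wcov_smul (κ : Fin 4 → Fin 4 → Fin 4 → Fin 4 → ℝ) (ξ : Fin 4 → ℝ) (c : ℝ)
    (α : Fin 4 → ℝ) (j k : Fin 4) :
    act κ (wcov ξ (c • α)) j k = c * act κ (wcov ξ α) j k := by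
  simp only [act, wcov, Pi.smul_apply, smul_eq_mul, Finset.mul_sum]
  exact Finset.sum_congr rfl fun r _ => Finset.sum_congr rfl fun s _ => by ring

/-- `L_ξ` as a linear map from covectors to 3-forms. -/
def Lmap (κ : Fin 4 → Fin 4 → Fin 4 → Fin 4 → ℝ) (ξ : Fin 4 → ℝ) :
    (Fin 4 → ℝ) →ₗ[ℝ] (Fin 4 → Fin 4 → Fin 4 → ℝ) where
  toFun α := Lfun κ ξ α
  map_add' α β := by
    funext i j k
    simp only [Lfun, act_wcov_add, Pi.add_apply]
    ring
  map_smul' c α := by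
    funext i j k
    simp only [Lfun, act_wcov_smul, Pi.smul_apply, smul_eq_mul, RingHom.id_apply]
    ring

/-!
Raising indices with `g⁻¹` turns `*_g (ξ ∧ α)` into `√|det g|` times the `ε`-dual of `u ∧ v`,
where `u = g⁻¹ ξ` and `v = g⁻¹ α`. By the Schouten identity, `ξ ∧ ⋆(u ∧ v)` is the `ε`-dual of the
vector `g(α, ξ) u - g(ξ, ξ) v`, so `L_ξ α = 0` iff `g(α, ξ) ξ = g(ξ, ξ) α`. For null `ξ` this says
that `α` lies in the kernel of the nonzero functional `g(·, ξ)`, a hyperplane; otherwise it says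
that `α` is a multiple of `ξ`.
-/

lemma fin4_cases (i : Fin 4) : i = 0 ∨ i = 1 ∨ i = 2 ∨ i = 3 := by
  fin_cases i <;> simp

lemma eps4_repeat_01 (i k l : Fin 4) : eps4 i i k l = 0 := by simp [eps4]
lemma eps4_repeat_02 (i j l : Fin 4) : eps4 i j i l = 0 := by simp [eps4]
lemma eps4_repeat_03 (i j k : Fin 4) : eps4 i j k i = 0 := by simp [eps4]
lemma eps4_repeat_12 (i j l : Fin 4) : eps4 i j j l = 0 := by simp [eps4]
lemma eps4_repeat_13 (i j k : Fin 4) : eps4 i j k j = 0 := by simp [eps4]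
lemma eps4_repeat_23 (i j k : Fin 4) : eps4 i j k k = 0 := by simp [eps4]

def epsMatrix (j k : Fin 4) : Matrix (Fin 4) (Fin 4) ℝ := Matrix.of fun a b => eps4 a b j k

lemma epsMatrix_transpose (j k : Fin 4) : (epsMatrix j k)ᵀ = -epsMatrix j k := by
  ext a b
  simp only [epsMatrix, transpose_apply, Matrix.neg_apply, of_apply]
  unfold eps4
  ring

/-- The Schouten identity `x ∧ ⋆(u ∧ v) = ⋆((v · x) u - (u · x) v)` in components. -/
lemma eps4_schouten (u v x : Fin 4 → ℝ) (i j k : Fin 4) :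
    x i * (u ⬝ᵥ epsMatrix j k *ᵥ v) + x j * (u ⬝ᵥ epsMatrix k i *ᵥ v)
        + x k * (u ⬝ᵥ epsMatrix i j *ᵥ v) =
      ((v ⬝ᵥ x) • u - (u ⬝ᵥ x) • v) ⬝ᵥ fun a => eps4 a i j k := by
  rcases fin4_cases i with rfl | rfl | rfl | rfl <;>
  rcases fin4_cases j with rfl | rfl | rfl | rfl <;>
  rcases fin4_cases k with rfl | rfl | rfl | rfl <;>
  · simp only [dotProduct, mulVec, epsMatrix, of_apply, Fin.sum_univ_four, Pi.sub_apply,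
      Pi.smul_apply, smul_eq_mul, eps4_repeat_01, eps4_repeat_02, eps4_repeat_03, eps4_repeat_12,
      eps4_repeat_13, eps4_repeat_23, mul_zero, add_zero, zero_add]
    norm_num [eps4] <;> ring

lemma eq_zero_of_forall_dotProduct_eps4 (w : Fin 4 → ℝ)
    (h : ∀ i j k, (w ⬝ᵥ fun a => eps4 a i j k) = 0) : w = 0 := by
  have h0 := h 1 2 3
  have h1 := h 0 2 3
  have h2 := h 0 1 3
  have h3 := h 0 1 2
  simp only [dotProduct, Fin.sum_univ_four, eps4_repeat_01, eps4_repeat_02, eps4_repeat_03,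
    mul_zero, add_zero, zero_add] at h0 h1 h2 h3
  norm_num [eps4] at h0 h1 h2 h3
  ext a
  rcases fin4_cases a with rfl | rfl | rfl | rfl <;> assumption

lemma dotProduct_mul_mul_transpose_mulVec {m n R : Type*} [Fintype m] [Fintype n]
    [CommSemiring R] (M : Matrix m n R) (A : Matrix n n R) (x y : m → R) :
    x ⬝ᵥ (M * A * Mᵀ) *ᵥ y = (x ᵥ* M) ⬝ᵥ A *ᵥ (y ᵥ* M) := by
  rw [← mulVec_mulVec, ← mulVec_mulVec, mulVec_transpose, dotProduct_mulVec]

lemma sum_sum_mul_wcov (B : Matrix (Fin 4) (Fin 4) ℝ) (ξ α : Fin 4 → ℝ) :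
    ∑ r, ∑ s, B r s * wcov ξ α r s = ξ ⬝ᵥ B *ᵥ α - α ⬝ᵥ B *ᵥ ξ := by
  simp only [wcov, dotProduct, mulVec, Finset.mul_sum, mul_sub, Finset.sum_sub_distrib]
  congr 1 <;> exact Finset.sum_congr rfl fun r _ => Finset.sum_congr rfl fun s _ => by ring

lemma of_hodge_eq_smul (g : Matrix (Fin 4) (Fin 4) ℝ) (j k : Fin 4) :
    Matrix.of (fun r s => hodge g r s j k) = Real.sqrt |g.det| • (g⁻¹ * epsMatrix j k * g⁻¹ᵀ) := by
  ext r s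
  simp only [hodge, epsMatrix, of_apply, Matrix.smul_apply, mul_apply, transpose_apply,
    smul_eq_mul, Finset.sum_mul]
  rw [Finset.sum_comm]
  exact congrArg _ (Finset.sum_congr rfl fun b _ => Finset.sum_congr rfl fun a _ => by ring)

lemma act_hodge_wcov (g : Matrix (Fin 4) (Fin 4) ℝ) (ξ α : Fin 4 → ℝ) (j k : Fin 4) :
    act (hodge g) (wcov ξ α) j k =
      Real.sqrt |g.det| * ((ξ ᵥ* g⁻¹) ⬝ᵥ epsMatrix j k *ᵥ (α ᵥ* g⁻¹)) := by
  have h := sum_sum_mul_wcov (Matrix.of fun r s => hodge g r s j k) ξ α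
  simp only [of_apply] at h
  rw [act, h, of_hodge_eq_smul]
  simp only [smul_mulVec, dotProduct_smul, smul_eq_mul, dotProduct_mul_mul_transpose_mulVec]
  rw [← dotProduct_transpose_mulVec, epsMatrix_transpose, neg_mulVec, dotProduct_neg]
  ring

lemma gform_eq_toLinearMap₂' (g : Matrix (Fin 4) (Fin 4) ℝ) (ξ η : Fin 4 → ℝ) :
    gform g ξ η = Matrix.toLinearMap₂' ℝ g⁻¹ ξ η := by
  simp only [gform, Matrix.toLinearMap₂'_apply, smul_eq_mul]
  exact Finset.sum_congr rfl fun i _ => Finset.sum_congr rfl fun j _ => by ring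

lemma gform_eq_vecMul_dotProduct (g : Matrix (Fin 4) (Fin 4) ℝ) (ξ η : Fin 4 → ℝ) :
    gform g ξ η = (ξ ᵥ* g⁻¹) ⬝ᵥ η := by
  rw [gform_eq_toLinearMap₂', Matrix.toLinearMap₂'_apply', dotProduct_mulVec]

lemma Lfun_hodge (g : Matrix (Fin 4) (Fin 4) ℝ) (ξ α : Fin 4 → ℝ) (i j k : Fin 4) :
    Lfun (hodge g) ξ α i j k = Real.sqrt |g.det| *
      ((gform g α ξ • (ξ ᵥ* g⁻¹) - gform g ξ ξ • (α ᵥ* g⁻¹)) ⬝ᵥ fun a => eps4 a i j k) := by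
  rw [gform_eq_vecMul_dotProduct, gform_eq_vecMul_dotProduct, ← eps4_schouten]
  simp only [Lfun, act_hodge_wcov]
  ring

lemma Lmap_hodge_eq_zero_iff {g : Matrix (Fin 4) (Fin 4) ℝ} (hdet : IsUnit g.det)
    (ξ α : Fin 4 → ℝ) : Lmap (hodge g) ξ α = 0 ↔
      gform g α ξ • (ξ ᵥ* g⁻¹) - gform g ξ ξ • (α ᵥ* g⁻¹) = 0 := by
  have hsqrt : Real.sqrt |g.det| ≠ 0 := (Real.sqrt_pos.2 (abs_pos.2 hdet.ne_zero)).ne'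
  change Lfun (hodge g) ξ α = 0 ↔ _
  constructor
  · intro h
    refine eq_zero_of_forall_dotProduct_eps4 _ fun i j k => ?_
    have hijk : Lfun (hodge g) ξ α i j k = 0 := congrFun (congrFun (congrFun h i) j) k
    rwa [Lfun_hodge, mul_eq_zero, or_iff_right hsqrt] at hijk
  · intro h
    ext i j k
    rw [Lfun_hodge, h, zero_dotProduct, mul_zero, Pi.zero_apply, Pi.zero_apply, Pi.zero_apply]

lemma mem_ker_Lmap_hodge_iff {g : Matrix (Fin 4) (Fin 4) ℝ} (hdet : IsUnit g.det)
    {ξ α : Fin 4 → ℝ} :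
    α ∈ LinearMap.ker (Lmap (hodge g) ξ) ↔ gform g α ξ • ξ = gform g ξ ξ • α := by
  have hinj : Function.Injective fun v : Fin 4 → ℝ => v ᵥ* g⁻¹ :=
    vecMul_injective_iff_isUnit.2 (isUnit_nonsing_inv_iff.2 ((isUnit_iff_isUnit_det g).2 hdet))
  rw [LinearMap.mem_ker, Lmap_hodge_eq_zero_iff hdet, ← smul_vecMul, ← smul_vecMul, ← sub_vecMul,
    ← zero_vecMul g⁻¹, hinj.eq_iff, sub_eq_zero]

lemma ker_Lmap_hodge_of_gform_self_eq_zero {g : Matrix (Fin 4) (Fin 4) ℝ} (hdet : IsUnit g.det)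
    {ξ : Fin 4 → ℝ} (hξ : ξ ≠ 0) (hnull : gform g ξ ξ = 0) :
    LinearMap.ker (Lmap (hodge g) ξ) = LinearMap.ker ((Matrix.toLinearMap₂' ℝ g⁻¹).flip ξ) := by
  ext α
  rw [mem_ker_Lmap_hodge_iff hdet, hnull, zero_smul, smul_eq_zero, or_iff_left hξ,
    LinearMap.mem_ker, LinearMap.flip_apply, gform_eq_toLinearMap₂']

lemma finrank_ker_Lmap_hodge_of_gform_self_eq_zero {g : Matrix (Fin 4) (Fin 4) ℝ}
    (hdet : IsUnit g.det) {ξ : Fin 4 → ℝ} (hξ : ξ ≠ 0) (hnull : gform g ξ ξ = 0) :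
    Module.finrank ℝ (LinearMap.ker (Lmap (hodge g) ξ)) = 3 := by
  have hsep : (Matrix.toLinearMap₂' ℝ g⁻¹).SeparatingRight :=
    LinearMap.separatingRight_toLinearMap₂'_iff_det_ne_zero.2
      (isUnit_nonsing_inv_det g hdet).ne_zero
  have hne : (Matrix.toLinearMap₂' ℝ g⁻¹).flip ξ ≠ 0 := fun h =>
    hξ (hsep ξ fun α => LinearMap.congr_fun h α)
  have hrank := Module.Dual.finrank_ker_add_one_of_ne_zero hne
  rw [Module.finrank_fin_fun, ← ker_Lmap_hodge_of_gform_self_eq_zero hdet hξ hnull] at hrank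
  omega

lemma ker_Lmap_hodge_of_gform_self_ne_zero {g : Matrix (Fin 4) (Fin 4) ℝ} (hdet : IsUnit g.det)
    {ξ : Fin 4 → ℝ} (hξξ : gform g ξ ξ ≠ 0) :
    LinearMap.ker (Lmap (hodge g) ξ) = Submodule.span ℝ {ξ} := by
  ext α
  rw [mem_ker_Lmap_hodge_iff hdet, Submodule.mem_span_singleton]
  constructor
  · intro hα
    exact ⟨gform g α ξ / gform g ξ ξ, by rw [div_eq_inv_mul, mul_smul, hα, inv_smul_smul₀ hξξ]⟩
  · rintro ⟨t, rfl⟩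
    rw [gform_eq_toLinearMap₂', LinearMap.map_smul₂, ← gform_eq_toLinearMap₂', smul_eq_mul,
      mul_smul, smul_comm]

theorem hodge_kernel_dimension_general
    (g : Matrix (Fin 4) (Fin 4) ℝ) (hdet : IsUnit g.det)
    (ξ : Fin 4 → ℝ) (hξ : ξ ≠ 0) :
    (gform g ξ ξ = 0 →
        Module.finrank ℝ (LinearMap.ker (Lmap (hodge g) ξ)) = 3) ∧
      (gform g ξ ξ ≠ 0 →
        Module.finrank ℝ (LinearMap.ker (Lmap (hodge g) ξ)) = 1 ∧
          LinearMap.ker (Lmap (hodge g) ξ) = Submodule.span ℝ {ξ}) := by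
  refine ⟨finrank_ker_Lmap_hodge_of_gform_self_eq_zero hdet hξ, fun hξξ => ?_⟩
  rw [ker_Lmap_hodge_of_gform_self_ne_zero hdet hξξ]
  exact ⟨finrank_span_singleton hξ, rfl⟩

/-- For the Hodge star medium tensor `κ = *_g` of an invertible symmetric `g`
and nonzero `ξ`, the kernel of `L_ξ : α ↦ ξ ∧ κ(ξ ∧ α)` has dimension 3 when `g(ξ,ξ) = 0`,
and dimension 1 -- namely `ker L_ξ = span ξ` -- when `g(ξ,ξ) ≠ 0`. -/
theorem hodge_kernel_dimension
    (g : Matrix (Fin 4) (Fin 4) ℝ) (hsymm : g.IsSymm) (hdet : IsUnit g.det)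
    (ξ : Fin 4 → ℝ) (hξ : ξ ≠ 0) :
    (gform g ξ ξ = 0 →
        Module.finrank ℝ (LinearMap.ker (Lmap (hodge g) ξ)) = 3) ∧
      (gform g ξ ξ ≠ 0 →
        Module.finrank ℝ (LinearMap.ker (Lmap (hodge g) ξ)) = 1 ∧
          LinearMap.ker (Lmap (hodge g) ξ) = Submodule.span ℝ {ξ}) :=
  hodge_kernel_dimension_general g hdet ξ hξ

end
end

section
/- Let κ be a medium tensor on ℝ⁴. Then the following are equivalent: (1) κ is of axion type, i.e. κ = c · Id for some real c; (2) ξ ∧ κ(ξ∧α) = 0 for all covectors ξ, α ∈ ℝ⁴ (equivalently, ker L_ξ is all of ℝ⁴ for every ξ). Moreover, when these hold, κ = (1/6)(trace κ) · Id, where trace κ = ½ κ^{ij}_{ij}. -/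
open scoped BigOperators
open Matrix

noncomputable section

/-- The identity endomorphism of 2-forms: `Id^{ij}_{rs} = δ^i_r δ^j_s - δ^i_s δ^j_r`. -/
def idm (i j r s : Fin 4) : ℝ :=
  (if i = r ∧ j = s then 1 else 0) - (if i = s ∧ j = r then 1 else 0)

/-!
If `κ = c · Id`, then `κ(ξ ∧ α) = c ξ ∧ α`, which dies when wedged with `ξ` again.
Conversely, testing `L` on basis covectors `ξ = e_a`, `α = e_b` shows `κ^{ab}_{jk} = 0`
unless `a ∈ {j, k}`, so by antisymmetry `κ(e_a ∧ e_b)` is the multiple `κ^{ab}_{ab}` of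
`e_a ∧ e_b`; testing `ξ = e_p + e_q`, `α = e_r` shows `κ^{qr}_{qr} = κ^{pr}_{pr}`, so all
these multiples agree. Finally `c · Id` has trace `6c`.
-/

theorem eq_on_offDiag_of_symm_of_shift {α β : Type*} (f : α → α → β)
    (hsymm : ∀ a b, f a b = f b a)
    (hshift : ∀ p q r, p ≠ q → p ≠ r → q ≠ r → f q r = f p r)
    {a b c d : α} (hab : a ≠ b) (hcd : c ≠ d) : f a b = f c d := by
  have hleft : ∀ {a b d}, a ≠ b → a ≠ d → f a b = f a d := by
    intro a b d hab had
    rcases eq_or_ne b d with rfl | hbd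
    · rfl
    · rw [hsymm a b, hsymm a d, hshift b d a hbd hab.symm had.symm]
  rcases eq_or_ne c a with rfl | hca
  · exact hleft hab hcd
  rcases eq_or_ne c b with rfl | hcb
  · rw [hsymm]; exact hleft hab.symm hcd
  · rw [← hshift a c b hca.symm hab hcb]; exact hleft hcb hcd

def axion (c : ℝ) (i j k l : Fin 4) : ℝ := c * idm i j k l

theorem isAlt_wcov (ξ α : Fin 4 → ℝ) : IsAlt (wcov ξ α) := fun i j => by
  simp only [wcov]; ring

theorem act_axion (c : ℝ) {F : Fin 4 → Fin 4 → ℝ} (hF : IsAlt F) (i j : Fin 4) :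
    act (axion c) F i j = c * F i j := by
  simp [act, axion, idm, sub_mul, mul_sub, ite_and, Finset.sum_sub_distrib, hF j i, ← two_mul]

theorem Lfun_axion (c : ℝ) (ξ α : Fin 4 → ℝ) (i j k : Fin 4) : Lfun (axion c) ξ α i j k = 0 := by
  simp only [Lfun, act_axion c (isAlt_wcov ξ α), wcov]
  ring

theorem mtrace_axion (c : ℝ) : mtrace (axion c) = 6 * c := by
  simp [mtrace, axion, idm, Fin.sum_univ_four]
  ring

section Medium

variable {κ : Fin 4 → Fin 4 → Fin 4 → Fin 4 → ℝ}

theorem act_wcov (hup : ∀ i j k l, κ i j k l = -κ j i k l) (ξ α : Fin 4 → ℝ) (m n : Fin 4) :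
    act κ (wcov ξ α) m n = ∑ r, ∑ s, κ r s m n * ξ r * α s := by
  have hswap : ∑ r, ∑ s, κ r s m n * ξ s * α r = -∑ r, ∑ s, κ r s m n * ξ r * α s := by
    rw [Finset.sum_comm]
    simp only [← Finset.sum_neg_distrib]
    refine Finset.sum_congr rfl fun r _ => Finset.sum_congr rfl fun s _ => ?_
    rw [hup]
    ring
  simp only [act, wcov, mul_sub, Finset.sum_sub_distrib, ← mul_assoc, hswap]
  ring

theorem act_wcov_single (hup : ∀ i j k l, κ i j k l = -κ j i k l) (a b m n : Fin 4) :
    act κ (wcov (Pi.single a 1) (Pi.single b 1)) m n = κ a b m n := by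
  simp [act_wcov hup, Pi.single_apply]

theorem act_wcov_add_single (hup : ∀ i j k l, κ i j k l = -κ j i k l) (p q b m n : Fin 4) :
    act κ (wcov (Pi.single p 1 + Pi.single q 1) (Pi.single b 1)) m n =
      κ p b m n + κ q b m n := by
  simp [act_wcov hup, Pi.single_apply, mul_add, Finset.sum_add_distrib]

section LVanishes

variable (hL : ∀ ξ α : Fin 4 → ℝ, ∀ i j k, Lfun κ ξ α i j k = 0)
include hL

theorem apply_eq_zero_of_Lfun_eq_zero (hup : ∀ i j k l, κ i j k l = -κ j i k l)
    {a b j k : Fin 4} (haj : a ≠ j) (hak : a ≠ k) : κ a b j k = 0 := by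
  simpa [Lfun, act_wcov_single hup, Pi.single_apply, haj.symm, hak.symm] using
    hL (Pi.single a 1) (Pi.single b 1) a j k

theorem apply_eq_zero_of_not_pair (hup : ∀ i j k l, κ i j k l = -κ j i k l)
    {i j k l : Fin 4} (hij : i ≠ j) (hkl : ¬(i = k ∧ j = l)) (hlk : ¬(i = l ∧ j = k)) :
    κ i j k l = 0 := by
  have hswap : j ≠ k → j ≠ l → κ i j k l = 0 := fun hjk hjl => by
    rw [hup, apply_eq_zero_of_Lfun_eq_zero hL hup hjk hjl, neg_zero]
  by_cases hik : i = k
  · subst hik; exact hswap hij.symm fun h => hkl ⟨rfl, h⟩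
  by_cases hil : i = l
  · subst hil; exact hswap (fun h => hlk ⟨rfl, h⟩) hij.symm
  exact apply_eq_zero_of_Lfun_eq_zero hL hup hik hil

theorem diag_eq_of_Lfun_eq_zero (hκ : IsMedium κ) {p q r : Fin 4} (hpq : p ≠ q) (hpr : p ≠ r)
    (hqr : q ≠ r) : κ q r q r = κ p r p r := by
  have h : κ p r q r + κ q r q r + (κ p r r p + κ q r r p) = 0 := by
    have h := hL (Pi.single p 1 + Pi.single q 1) (Pi.single r 1) r p q
    simp only [Lfun, act_wcov_add_single hκ.1] at h
    simpa [hpr.symm, hqr.symm, hpq, hpq.symm] using h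
  rw [apply_eq_zero_of_Lfun_eq_zero hL hκ.1 hpq hpr,
    apply_eq_zero_of_Lfun_eq_zero hL hκ.1 hqr hpq.symm, hκ.2 p r r p] at h
  linarith

theorem eq_axion_of_Lfun_eq_zero (hκ : IsMedium κ) : κ = axion (κ 0 1 0 1) := by
  have hdiag : ∀ a b : Fin 4, a ≠ b → κ a b a b = κ 0 1 0 1 := fun a b hab =>
    eq_on_offDiag_of_symm_of_shift (fun a b => κ a b a b)
      (fun a b => by rw [hκ.1, hκ.2, neg_neg])
      (fun _ _ _ hpq hpr hqr => diag_eq_of_Lfun_eq_zero hL hκ hpq hpr hqr) hab (by decide)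
  funext i j k l
  simp only [axion]
  by_cases hij : i = j
  · subst hij
    have : κ i i k l = 0 := by linarith [hκ.1 i i k l]
    simp [this, idm, and_comm]
  by_cases hkl : i = k ∧ j = l
  · obtain ⟨rfl, rfl⟩ := hkl
    simp [idm, hij, hdiag i j hij]
  by_cases hlk : i = l ∧ j = k
  · obtain ⟨rfl, rfl⟩ := hlk
    simp [idm, hij, Ne.symm hij, hκ.2 i j j i, hdiag i j hij]
  simp [idm, hkl, hlk, apply_eq_zero_of_not_pair hL hκ.1 hij hkl hlk]

end LVanishes

end Medium

/-- A medium tensor `κ` is of axion type (`κ = c · Id` for some real `c`)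
if and only if `ξ ∧ κ(ξ ∧ α) = 0` for all covectors `ξ, α`; moreover, when this holds,
`κ = (1/6)(trace κ) · Id`. -/
theorem axion_iff_L_vanishes
    (κ : Fin 4 → Fin 4 → Fin 4 → Fin 4 → ℝ) (hκ : IsMedium κ) :
    ((∃ c : ℝ, ∀ i j k l, κ i j k l = c * idm i j k l) ↔
        (∀ ξ α : Fin 4 → ℝ, ∀ i j k, Lfun κ ξ α i j k = 0)) ∧
      ((∀ ξ α : Fin 4 → ℝ, ∀ i j k, Lfun κ ξ α i j k = 0) →
        ∀ i j k l, κ i j k l = (1 / 6) * mtrace κ * idm i j k l) := by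
  have hconv : (∀ ξ α : Fin 4 → ℝ, ∀ i j k, Lfun κ ξ α i j k = 0) → ∃ c, κ = axion c :=
    fun hL => ⟨_, eq_axion_of_Lfun_eq_zero hL hκ⟩
  refine ⟨⟨?_, fun hL => ?_⟩, fun hL => ?_⟩
  · rintro ⟨c, hc⟩
    obtain rfl : κ = axion c := by ext i j k l; exact hc i j k l
    exact Lfun_axion c
  · obtain ⟨c, rfl⟩ := hconv hL
    exact ⟨c, fun _ _ _ _ => rfl⟩
  · obtain ⟨c, rfl⟩ := hconv hL
    intro i j k l
    rw [mtrace_axion]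
    simp only [axion]
    ring

end
end

section
/- Let g and h be invertible symmetric real 4×4 matrices of Lorentzian signature. Then the following are equivalent: (1) there exists a nonzero real λ with h = λ g; (2) *_g = *_h, i.e. the Hodge star medium tensors of g and h have equal components; (3) g and h have the same null cones: {x ∈ ℝ⁴ : g_{ij} x^i x^j = 0} = {x ∈ ℝ⁴ : h_{ij} x^i x^j = 0}. -/
open scoped BigOperators
open Matrix

noncomputable section

/-!
The Hodge star `*_g` is, up to the Levi-Civita contraction, the array of `2 × 2` minors of `g⁻¹`
weighted by `√|det g|`, and that contraction is injective on antisymmetric arrays. So `*_g = *_h`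
says that `Λ²(h⁻¹)` is a positive multiple of `Λ²(g⁻¹)`. In dimension at least three the second
compound determines a matrix up to sign: if `Λ²C = 1`, the equation `cᵢ ∧ cⱼ = eᵢ ∧ eⱼ` for
the rows of `C` puts `cᵢ` in `span(eᵢ, eⱼ)` for every `j ≠ i`, so `C` is a scalar `±1`. Hence
`h⁻¹ ∝ g⁻¹`. Conversely, rescaling `g` by `λ` multiplies `√|det g|` by `λ²` and each factor of
`g⁻¹` by `λ⁻¹`.

For the null cones, a congruence takes `g` to `±η` with `η` the Minkowski metric, and `h` to a
symmetric form vanishing on the light cone of `η`. Such a form is a multiple of `η`: the null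
vectors `(1, ±eₐ)` force `M₀ₐ = 0` and `Mₐₐ = -M₀₀`, and the Pythagorean null vectors
`(5, 3, 4, 0)`, `(5, 3, 0, 4)`, `(5, 0, 3, 4)` then kill the spatial off-diagonal entries.
-/

theorem Fintype.exists_ne_ne_of_two_lt_card {n : Type*} [Fintype n] (hn : 2 < Fintype.card n)
    (a b : n) : ∃ c, c ≠ a ∧ c ≠ b := by
  classical
  obtain ⟨c, -, hc⟩ := Finset.exists_mem_notMem_of_card_lt_card
    (s := {a, b}) (t := Finset.univ) (Finset.card_le_two.trans_lt hn)
  simp only [Finset.mem_insert, Finset.mem_singleton, not_or] at hc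
  exact ⟨c, hc⟩

namespace Matrix

theorem inv_smul_of_ne_zero {n K : Type*} [Fintype n] [DecidableEq n] [Field K] {l : K}
    (hl : l ≠ 0) {A : Matrix n n K} (hA : IsUnit A.det) : (l • A)⁻¹ = l⁻¹ • A⁻¹ :=
  inv_eq_left_inv (by rw [smul_mul_smul_comm, inv_mul_cancel₀ hl, nonsing_inv_mul A hA, one_smul])

section minor2

variable {n R : Type*} [CommRing R]

def minor2 (A : Matrix n n R) (i j k l : n) : R := A i k * A j l - A i l * A j k

theorem minor2_smul (c : R) (A : Matrix n n R) (i j k l : n) :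
    minor2 (c • A) i j k l = c * c * minor2 A i j k l := by
  simp only [minor2, smul_apply, smul_eq_mul]
  ring

variable [Fintype n]

theorem minor2_mul (B X : Matrix n n R) (i j k l : n) :
    minor2 (B * X) i j k l = ∑ a, ∑ b, minor2 B i j a b * X a k * X b l := by
  have hswap : ∑ a, ∑ b, B i b * B j a * X a k * X b l =
      ∑ a, ∑ b, B i a * X a l * (B j b * X b k) := by
    rw [Finset.sum_comm]
    exact Finset.sum_congr rfl fun _ _ => Finset.sum_congr rfl fun _ _ => by ring
  simp only [minor2, mul_apply, Finset.sum_mul_sum, sub_mul, Finset.sum_sub_distrib, hswap]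
  congr 1
  exact Finset.sum_congr rfl fun _ _ => Finset.sum_congr rfl fun _ _ => by ring

variable [DecidableEq n]

theorem apply_eq_zero_of_minor2_eq_minor2_one (hn : 2 < Fintype.card n) {C : Matrix n n R}
    (hC : ∀ i j k l, minor2 C i j k l = minor2 1 i j k l) {i m : n} (him : i ≠ m) :
    C i m = 0 := by
  obtain ⟨j, hji, hjm⟩ := Fintype.exists_ne_ne_of_two_lt_card hn i m
  have e1 := hC i j i j
  have e2 := hC i j m j
  have e3 := hC i j m i
  simp only [minor2, one_apply_eq, one_apply_ne him, one_apply_ne hji, one_apply_ne hji.symm,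
    one_apply_ne hjm] at e1 e2 e3
  linear_combination -C i m * e1 + C i i * e2 - C i j * e3

theorem eq_one_or_eq_neg_one_of_minor2_eq_minor2_one [NoZeroDivisors R]
    (hn : 2 < Fintype.card n) {C : Matrix n n R}
    (hC : ∀ i j k l, minor2 C i j k l = minor2 1 i j k l) : C = 1 ∨ C = -1 := by
  have hoff {i m : n} (him : i ≠ m) : C i m = 0 :=
    apply_eq_zero_of_minor2_eq_minor2_one hn hC him
  have hdiag : ∀ i j, i ≠ j → C i i * C j j = 1 := fun i j hij => by
    simpa [minor2, hoff hij, hoff hij.symm, one_apply, hij] using hC i j i j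
  have hconst : ∀ j k, C j j = C k k := fun j k => by
    obtain ⟨i, hij, hik⟩ := Fintype.exists_ne_ne_of_two_lt_card hn j k
    linear_combination C k k * hdiag i j hij - C j j * hdiag i k hik
  obtain ⟨a, b, -, hab, -⟩ := Fintype.two_lt_card_iff.mp hn
  have hC : C = C a a • 1 := by
    ext i j
    by_cases hij : i = j
    · subst hij; simp [hconst i a]
    · simp [hoff hij, hij]
  have hsq : C a a * C a a = 1 := by simpa [hconst b a] using hdiag a b hab
  rcases mul_self_eq_one_iff.mp hsq with h | h
  · left; rw [hC, h, one_smul]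
  · right; rw [hC, h, neg_one_smul]

theorem eq_or_eq_neg_of_minor2_eq [NoZeroDivisors R] (hn : 2 < Fintype.card n)
    {A B : Matrix n n R} (hA : IsUnit A.det)
    (hAB : ∀ i j k l, minor2 B i j k l = minor2 A i j k l) : B = A ∨ B = -A := by
  have hC : ∀ i j k l, minor2 (B * A⁻¹) i j k l = minor2 1 i j k l := fun i j k l => by
    rw [← mul_nonsing_inv A hA, minor2_mul, minor2_mul]
    simp only [hAB]
  have hBA : B = B * A⁻¹ * A := by rw [Matrix.mul_assoc, nonsing_inv_mul A hA, Matrix.mul_one]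
  rcases eq_one_or_eq_neg_one_of_minor2_eq_minor2_one hn hC with h | h
  · left; rw [hBA, h, Matrix.one_mul]
  · right; rw [hBA, h, Matrix.neg_mul, Matrix.one_mul]

theorem exists_smul_eq_of_minor2_eq_mul (hn : 2 < Fintype.card n) {A B : Matrix n n ℝ}
    (hA : IsUnit A.det) {t : ℝ} (ht : 0 < t)
    (hAB : ∀ i j k l, minor2 B i j k l = t * minor2 A i j k l) :
    ∃ s : ℝ, s ≠ 0 ∧ B = s • A := by
  have hs : √t ≠ 0 := (Real.sqrt_pos.mpr ht).ne'
  have hsA : IsUnit (√t • A).det := by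
    rw [det_smul]; exact (IsUnit.pow _ hs.isUnit).mul hA
  rcases eq_or_eq_neg_of_minor2_eq hn hsA fun i j k l => by
      rw [hAB, minor2_smul, Real.mul_self_sqrt ht.le] with h | h
  · exact ⟨√t, hs, h⟩
  · exact ⟨-√t, neg_ne_zero.mpr hs, by rw [h, neg_smul]⟩

end minor2

section nullCone

variable {n R : Type*} [Fintype n] [CommRing R]

def nullCone (M : Matrix n n R) : Set (n → R) := {x | ∑ i, ∑ j, M i j * x i * x j = 0}

theorem sum_sum_mul_mul_eq_dotProduct_mulVec (M : Matrix n n R) (x : n → R) :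
    ∑ i, ∑ j, M i j * x i * x j = x ⬝ᵥ M *ᵥ x := by
  simp only [dotProduct, mulVec, Finset.mul_sum]
  exact Finset.sum_congr rfl fun _ _ => Finset.sum_congr rfl fun _ _ => by ring

theorem nullCone_smul [NoZeroDivisors R] {l : R} (hl : l ≠ 0) (M : Matrix n n R) :
    nullCone (l • M) = nullCone M := by
  ext x
  simp only [nullCone, Set.mem_ofPred_eq, sum_sum_mul_mul_eq_dotProduct_mulVec, smul_mulVec,
    dotProduct_smul, smul_eq_mul, mul_eq_zero, hl, false_or]

theorem mem_nullCone_transpose_mul_mul (M P : Matrix n n R) (y : n → R) :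
    y ∈ nullCone (Pᵀ * M * P) ↔ P *ᵥ y ∈ nullCone M := by
  simp only [nullCone, Set.mem_ofPred_eq, sum_sum_mul_mul_eq_dotProduct_mulVec, ← mulVec_mulVec,
    dotProduct_mulVec, vecMul_transpose]

end nullCone

end Matrix

theorem eps4_swap_s13 (a b r s : Fin 4) : eps4 b a r s = -eps4 a b r s := by
  unfold eps4
  ring

theorem sum_mul_mul_eps4_eq_sum_minor2 (M : Matrix (Fin 4) (Fin 4) ℝ) (i j r s : Fin 4) :
    ∑ a, ∑ b, M i a * M j b * eps4 a b r s =
      (1 / 2) * ∑ a, ∑ b, minor2 M i j a b * eps4 a b r s := by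
  have hswap : ∑ a, ∑ b, M i b * M j a * eps4 a b r s =
      -∑ a, ∑ b, M i a * M j b * eps4 a b r s := by
    rw [Finset.sum_comm, ← Finset.sum_neg_distrib]
    refine Finset.sum_congr rfl fun a _ => ?_
    rw [← Finset.sum_neg_distrib]
    refine Finset.sum_congr rfl fun b _ => ?_
    rw [eps4_swap_s13]
    ring
  simp only [minor2, sub_mul, Finset.sum_sub_distrib, hswap]
  ring

theorem hodge_eq_sum_minor2_inv (g : Matrix (Fin 4) (Fin 4) ℝ) (i j r s : Fin 4) :
    hodge g i j r s = √|g.det| / 2 * ∑ a, ∑ b, minor2 g⁻¹ i j a b * eps4 a b r s := by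
  rw [hodge, sum_mul_mul_eps4_eq_sum_minor2]
  ring

theorem IsAlt.eq_zero_of_sum_mul_eps4_eq_zero {w : Fin 4 → Fin 4 → ℝ} (hw : IsAlt w)
    (h : ∀ r s, ∑ a, ∑ b, w a b * eps4 a b r s = 0) : w = 0 := by
  have e01 := h 2 3
  have e02 := h 1 3
  have e03 := h 1 2
  have e12 := h 0 3
  have e13 := h 0 2
  have e23 := h 0 1
  simp only [Fin.sum_univ_four] at e01 e02 e03 e12 e13 e23
  norm_num [eps4] at e01 e02 e03 e12 e13 e23
  funext i j
  have hij := hw i j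
  have hii := hw i i
  fin_cases i <;> fin_cases j <;>
    simp only [Fin.zero_eta, Fin.mk_one, Fin.reduceFinMk, Fin.isValue, Pi.zero_apply]
      at hij hii ⊢ <;>
    linarith

theorem sqrt_abs_det_mul_minor2_inv_eq_of_hodge_eq {g h : Matrix (Fin 4) (Fin 4) ℝ}
    (he : ∀ i j r s, hodge g i j r s = hodge h i j r s) (i j k l : Fin 4) :
    √|h.det| * minor2 h⁻¹ i j k l = √|g.det| * minor2 g⁻¹ i j k l := by
  set w : Fin 4 → Fin 4 → ℝ := fun k l =>
    √|h.det| * minor2 h⁻¹ i j k l - √|g.det| * minor2 g⁻¹ i j k l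
  have hw : IsAlt w := fun k l => by simp only [w, minor2]; ring
  have hw0 : w = 0 := hw.eq_zero_of_sum_mul_eps4_eq_zero fun r s => by
    have hrs := he i j r s
    rw [hodge_eq_sum_minor2_inv, hodge_eq_sum_minor2_inv] at hrs
    simp only [w, sub_mul, Finset.sum_sub_distrib, mul_assoc, ← Finset.mul_sum]
    linear_combination -2 * hrs
  exact sub_eq_zero.mp (congr_fun₂ hw0 k l)

theorem hodge_smul {l : ℝ} (hl : l ≠ 0) {g : Matrix (Fin 4) (Fin 4) ℝ} (hg : IsUnit g.det) :
    hodge (l • g) = hodge g := by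
  have hsqrt : √|(l • g).det| = l ^ 2 * √|g.det| := by
    rw [det_smul, Fintype.card_fin, abs_mul, Real.sqrt_mul (abs_nonneg _),
      show |l ^ 4| = (l ^ 2) ^ 2 by rw [abs_of_nonneg (by positivity)]; ring,
      Real.sqrt_sq (sq_nonneg l)]
  funext i j r s
  rw [hodge_eq_sum_minor2_inv, hodge_eq_sum_minor2_inv, hsqrt, inv_smul_of_ne_zero hl hg]
  simp only [minor2_smul, mul_assoc, ← Finset.mul_sum]
  field_simp

theorem exists_smul_eq_of_hodge_eq {g h : Matrix (Fin 4) (Fin 4) ℝ} (hg : IsUnit g.det)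
    (hh : IsUnit h.det) (he : ∀ i j r s, hodge g i j r s = hodge h i j r s) :
    ∃ l : ℝ, l ≠ 0 ∧ h = l • g := by
  have sqrt_pos {M : Matrix (Fin 4) (Fin 4) ℝ} (hM : IsUnit M.det) : 0 < √|M.det| :=
    Real.sqrt_pos.mpr (abs_pos.mpr hM.ne_zero)
  obtain ⟨s, hs, hinv⟩ := exists_smul_eq_of_minor2_eq_mul (by simp) (isUnit_nonsing_inv_det g hg)
    (div_pos (sqrt_pos hg) (sqrt_pos hh)) fun i j k l => by
      rw [div_mul_eq_mul_div, ← sqrt_abs_det_mul_minor2_inv_eq_of_hodge_eq he,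
        mul_div_cancel_left₀ _ (sqrt_pos hh).ne']
  refine ⟨s⁻¹, inv_ne_zero hs, ?_⟩
  rw [← nonsing_inv_nonsing_inv h hh, hinv, inv_smul_of_ne_zero hs (isUnit_nonsing_inv_det g hg),
    nonsing_inv_nonsing_inv g hg]

def minkowski : Matrix (Fin 4) (Fin 4) ℝ := diagonal ![1, -1, -1, -1]

theorem mem_nullCone_minkowski (y : Fin 4 → ℝ) :
    y ∈ nullCone minkowski ↔ y 0 ^ 2 = y 1 ^ 2 + y 2 ^ 2 + y 3 ^ 2 := by
  simp only [nullCone, minkowski, Set.mem_ofPred_eq, sum_sum_mul_mul_eq_dotProduct_mulVec]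
  simp only [mulVec_diagonal, dotProduct, Fin.sum_univ_four]
  norm_num [cons_val_two, cons_val_three]
  constructor <;> intro h <;> linarith

theorem eq_smul_minkowski_of_nullCone_subset {M : Matrix (Fin 4) (Fin 4) ℝ} (hM : M.IsSymm)
    (h : nullCone minkowski ⊆ nullCone M) : M = M 0 0 • minkowski := by
  have q (y : Fin 4 → ℝ) (hy : y 0 ^ 2 = y 1 ^ 2 + y 2 ^ 2 + y 3 ^ 2) :
      ∑ i, ∑ j, M i j * y i * y j = 0 := h ((mem_nullCone_minkowski y).mpr hy)
  have e1 := q ![1, 1, 0, 0] (by norm_num [cons_val_two, cons_val_three])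
  have e2 := q ![1, -1, 0, 0] (by norm_num [cons_val_two, cons_val_three])
  have e3 := q ![1, 0, 1, 0] (by norm_num [cons_val_two, cons_val_three])
  have e4 := q ![1, 0, -1, 0] (by norm_num [cons_val_two, cons_val_three])
  have e5 := q ![1, 0, 0, 1] (by norm_num [cons_val_two, cons_val_three])
  have e6 := q ![1, 0, 0, -1] (by norm_num [cons_val_two, cons_val_three])
  have e7 := q ![5, 3, 4, 0] (by norm_num [cons_val_two, cons_val_three])
  have e8 := q ![5, 3, 0, 4] (by norm_num [cons_val_two, cons_val_three])
  have e9 := q ![5, 0, 3, 4] (by norm_num [cons_val_two, cons_val_three])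
  simp only [Fin.sum_univ_four] at e1 e2 e3 e4 e5 e6 e7 e8 e9
  norm_num [cons_val_two, cons_val_three] at e1 e2 e3 e4 e5 e6 e7 e8 e9
  have s01 := hM.apply 0 1
  have s02 := hM.apply 0 2
  have s03 := hM.apply 0 3
  have s12 := hM.apply 1 2
  have s13 := hM.apply 1 3
  have s23 := hM.apply 2 3
  ext i j
  fin_cases i <;> fin_cases j <;> simp [minkowski] <;> linarith

theorem IsLorentzian.exists_transpose_mul_mul_eq_smul_minkowski {g : Matrix (Fin 4) (Fin 4) ℝ}
    (hg : IsLorentzian g) :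
    ∃ P : Matrix (Fin 4) (Fin 4) ℝ, IsUnit P.det ∧ ∃ c : ℝ, c ≠ 0 ∧ Pᵀ * g * P = c • minkowski := by
  obtain ⟨P, hP, hPg | hPg⟩ := hg
  · exact ⟨P, hP, 1, one_ne_zero, by rw [hPg, one_smul, minkowski]⟩
  · refine ⟨P, hP, -1, by norm_num, ?_⟩
    rw [hPg, minkowski, neg_one_smul, diagonal_neg]
    congr 1
    ext i
    fin_cases i <;> simp

theorem exists_smul_eq_of_nullCone_subset {g h : Matrix (Fin 4) (Fin 4) ℝ} (hg : IsLorentzian g)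
    (hh : h.IsSymm) (hhdet : IsUnit h.det) (hgh : nullCone g ⊆ nullCone h) :
    ∃ l : ℝ, l ≠ 0 ∧ h = l • g := by
  obtain ⟨P, hP, c, hc, hPg⟩ := hg.exists_transpose_mul_mul_eq_smul_minkowski
  have hsymm : (Pᵀ * h * P).IsSymm := by
    simp only [IsSymm, transpose_mul, transpose_transpose, hh.eq, Matrix.mul_assoc]
  have hsub : nullCone minkowski ⊆ nullCone (Pᵀ * h * P) := fun y hy => by
    rw [← nullCone_smul hc, ← hPg, mem_nullCone_transpose_mul_mul] at hy
    exact (mem_nullCone_transpose_mul_mul h P y).mpr (hgh hy)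
  have hPh : Pᵀ * h * P = Pᵀ * (((Pᵀ * h * P) 0 0 / c) • g) * P := by
    rw [Matrix.mul_smul, Matrix.smul_mul, hPg, smul_smul, div_mul_cancel₀ _ hc]
    exact eq_smul_minkowski_of_nullCone_subset hsymm hsub
  have hPu : IsUnit P := (isUnit_iff_isUnit_det P).mpr hP
  have hPtu : IsUnit Pᵀ := (isUnit_iff_isUnit_det Pᵀ).mpr (by rwa [det_transpose])
  have hhg := hPtu.mul_left_cancel (hPu.mul_right_cancel hPh)
  refine ⟨_, fun h0 => ?_, hhg⟩
  rw [h0, zero_smul] at hhg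
  simp [hhg] at hhdet

theorem lorentz_conformal_iff_hodge_iff_nullcone_general
    (g h : Matrix (Fin 4) (Fin 4) ℝ) (hh : h.IsSymm)
    (hgdet : IsUnit g.det) (hhdet : IsUnit h.det)
    (hgL : IsLorentzian g) :
    ((∃ l : ℝ, l ≠ 0 ∧ h = l • g) ↔
        (∀ i j r s, hodge g i j r s = hodge h i j r s)) ∧
      ((∃ l : ℝ, l ≠ 0 ∧ h = l • g) ↔
        ({x : Fin 4 → ℝ | ∑ i, ∑ j, g i j * x i * x j = 0} =
          {x : Fin 4 → ℝ | ∑ i, ∑ j, h i j * x i * x j = 0})) := by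
  refine ⟨⟨?_, exists_smul_eq_of_hodge_eq hgdet hhdet⟩,
    ⟨?_, fun hgh => exists_smul_eq_of_nullCone_subset hgL hh hhdet hgh.subset⟩⟩
  · rintro ⟨l, hl, rfl⟩ i j r s
    rw [hodge_smul hl hgdet]
  · rintro ⟨l, hl, rfl⟩
    exact (nullCone_smul hl g).symm

/-- For invertible symmetric Lorentzian 4×4 matrices `g, h`, the following
are equivalent: (1) `h = λ g` for a nonzero real `λ`; (2) `*_g = *_h`; (3) `g` and `h`
have the same null cones `{x : g_{ij} x^i x^j = 0}`. -/
theorem lorentz_conformal_iff_hodge_iff_nullcone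
    (g h : Matrix (Fin 4) (Fin 4) ℝ) (hg : g.IsSymm) (hh : h.IsSymm)
    (hgdet : IsUnit g.det) (hhdet : IsUnit h.det)
    (hgL : IsLorentzian g) (hhL : IsLorentzian h) :
    ((∃ l : ℝ, l ≠ 0 ∧ h = l • g) ↔
        (∀ i j r s, hodge g i j r s = hodge h i j r s)) ∧
      ((∃ l : ℝ, l ≠ 0 ∧ h = l • g) ↔
        ({x : Fin 4 → ℝ | ∑ i, ∑ j, g i j * x i * x j = 0} =
          {x : Fin 4 → ℝ | ∑ i, ∑ j, h i j * x i * x j = 0})) :=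
  lorentz_conformal_iff_hodge_iff_nullcone_general g h hh hgdet hhdet hgL

end
end
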